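/- Let T ∈ G(n,n-2) be an (n-2)-dimensional linear subspace of ℝⁿ, let L ∈ G(n,2) be a 2-plane with ‖P_L - P_{T^⊥}‖ ≤ 1/4 (operator norm of the difference of orthogonal projections), and let h ∈ ℝⁿ with |h| ≤ 1/8. Then the affine plane L + h intersects T in exactly one point z, and |z| ≤ 1/6. -/

import Mathlib

/-!
Write `P` and `Q` for the orthogonal projections onto `L` and `Tᗮ`, and `c = ‖P - Q‖ < 1`.
A point `z ∈ T` with `z - h ∈ L` satisfies `z = (1 - P) h + (P - Q) z`, whence
`(1 - c) ‖z‖ ≤ ‖h‖`; applied to differences of solutions this gives uniqueness.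
Conversely every solution of `(1 - (P - Q)) z = (1 - P) h` lies in `T` with `z - h ∈ L`:
the equation says that `Q z ∈ Tᗮ` and `(1 - P) (z - h) ∈ Lᗮ` add up to zero, while
`Tᗮ ∩ Lᗮ = 0` since `c < 1`. As `1 - (P - Q)` is invertible by the Neumann series,
such a solution exists.
-/

variable {𝕜 E : Type*} [RCLike 𝕜] [NormedAddCommGroup E] [InnerProductSpace 𝕜 E]

namespace Submodule

theorem eq_zero_of_mem_orthogonal_of_mem_of_norm_starProjection_sub_lt_one
    {K M : Submodule 𝕜 E} [K.HasOrthogonalProjection] [M.HasOrthogonalProjection]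
    (hKM : ‖K.starProjection - M.starProjection‖ < 1) {v : E} (hvK : v ∈ Kᗮ)
    (hvM : v ∈ M) : v = 0 := by
  have hv : (K.starProjection - M.starProjection) v = -v := by
    simp [(K.starProjection_apply_eq_zero_iff).2 hvK, starProjection_eq_self_iff.2 hvM]
  have hle : ‖v‖ ≤ ‖K.starProjection - M.starProjection‖ * ‖v‖ := by
    simpa [hv] using (K.starProjection - M.starProjection).le_opNorm v
  exact norm_le_zero_iff.1 (by nlinarith [norm_nonneg v])

variable {T L : Submodule 𝕜 E} [T.HasOrthogonalProjection] [L.HasOrthogonalProjection] {h z : E}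

theorem one_sub_norm_mul_norm_le_of_mem_of_sub_mem (hz : z ∈ T) (hzh : z - h ∈ L) :
    (1 - ‖L.starProjection - Tᗮ.starProjection‖) * ‖z‖ ≤ ‖h‖ := by
  have hPz : L.starProjection z = z - h + L.starProjection h := by
    rw [← starProjection_eq_self_iff.2 hzh, map_sub, sub_add_cancel]
  have hQz : Tᗮ.starProjection z = 0 := starProjection_orthogonal_apply_eq_zero hz
  have hdecomp : z = Lᗮ.starProjection h + (L.starProjection - Tᗮ.starProjection) z := by
    rw [_root_.sub_apply, hPz, hQz, starProjection_orthogonal_val]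
    abel
  have hbound : ‖z‖ ≤ ‖h‖ + ‖L.starProjection - Tᗮ.starProjection‖ * ‖z‖ :=
    calc ‖z‖
        ≤ ‖Lᗮ.starProjection h‖ + ‖(L.starProjection - Tᗮ.starProjection) z‖ :=
          (congrArg norm hdecomp).trans_le (norm_add_le _ _)
      _ ≤ ‖h‖ + ‖L.starProjection - Tᗮ.starProjection‖ * ‖z‖ :=
          add_le_add (Lᗮ.norm_starProjection_apply_le h) (ContinuousLinearMap.le_opNorm _ _)
  linarith

theorem mem_and_sub_mem_of_sub_apply_eq (hTL : ‖L.starProjection - Tᗮ.starProjection‖ < 1)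
    (hz : z - (L.starProjection - Tᗮ.starProjection) z = h - L.starProjection h) :
    z ∈ T ∧ z - h ∈ L := by
  have hsum : Tᗮ.starProjection z = -((z - h) - L.starProjection (z - h)) := by
    rw [_root_.sub_apply] at hz
    rw [map_sub]
    linear_combination (norm := module) hz
  have hQz : Tᗮ.starProjection z = 0 := by
    refine eq_zero_of_mem_orthogonal_of_mem_of_norm_starProjection_sub_lt_one hTL ?_
      (Tᗮ.orthogonalProjectionOnto z).2
    rw [hsum]
    exact neg_mem (sub_starProjection_mem_orthogonal _)
  have hzT : z ∈ T := by
    rwa [starProjection_apply_eq_zero_iff, orthogonal_orthogonal] at hQz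
  rw [hQz, eq_comm, neg_eq_zero, sub_eq_zero] at hsum
  exact ⟨hzT, starProjection_eq_self_iff.1 hsum.symm⟩

theorem eq_of_mem_of_sub_mem (hTL : ‖L.starProjection - Tᗮ.starProjection‖ < 1)
    {w : E} (hz : z ∈ T) (hzh : z - h ∈ L) (hw : w ∈ T) (hwh : w - h ∈ L) : w = z := by
  have hdiff := one_sub_norm_mul_norm_le_of_mem_of_sub_mem (h := 0) (sub_mem hw hz)
    (by simpa using sub_mem hwh hzh)
  rw [norm_zero] at hdiff
  exact sub_eq_zero.1 (norm_le_zero_iff.1 (by nlinarith [norm_nonneg (w - z)]))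

theorem existsUnique_mem_and_sub_mem [CompleteSpace E]
    (hTL : ‖L.starProjection - Tᗮ.starProjection‖ < 1) (h : E) :
    ∃! z, z ∈ T ∧ z - h ∈ L := by
  obtain ⟨B, hB⟩ := (isUnit_one_sub_of_norm_lt_one hTL).exists_right_inv
  obtain ⟨hzT, hzL⟩ :=
    mem_and_sub_mem_of_sub_apply_eq hTL congr($hB (h - L.starProjection h))
  exact ⟨_, ⟨hzT, hzL⟩, fun w ⟨hwT, hwL⟩ ↦ eq_of_mem_of_sub_mem hTL hzT hzL hwT hwL⟩

end Submodule

theorem stmt_16_general (n : ℕ)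
    (T L : Submodule ℝ (EuclideanSpace ℝ (Fin n)))
    (hdist : ‖(L.subtypeL.comp (L.orthogonalProjectionOnto))
      - (Tᗮ.subtypeL.comp (Tᗮ.orthogonalProjectionOnto))‖ ≤ 1 / 4)
    (h : EuclideanSpace ℝ (Fin n)) (hh : ‖h‖ ≤ 1 / 8) :
    ∃ z : EuclideanSpace ℝ (Fin n),
      (z ∈ T ∧ z - h ∈ L) ∧ ‖z‖ ≤ 1 / 6 ∧
        ∀ w : EuclideanSpace ℝ (Fin n), w ∈ T ∧ w - h ∈ L → w = z := by
  change ‖L.starProjection - Tᗮ.starProjection‖ ≤ 1 / 4 at hdist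
  obtain ⟨z, hz, hunique⟩ := Submodule.existsUnique_mem_and_sub_mem
    (hdist.trans_lt (by norm_num)) h
  have hbound := Submodule.one_sub_norm_mul_norm_le_of_mem_of_sub_mem hz.1 hz.2
  exact ⟨z, hz, by nlinarith [norm_nonneg z], hunique⟩

/-- If T is an (n-2)-plane, L a 2-plane with ‖P_L - P_{T^⊥}‖ ≤ 1/4 in operator norm,
and |h| ≤ 1/8, then the affine plane L + h meets T in exactly one point z, which
satisfies |z| ≤ 1/6. -/
theorem stmt_16 (n : ℕ) (hn : 2 ≤ n)
    (T L : Submodule ℝ (EuclideanSpace ℝ (Fin n)))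
    (hT : Module.finrank ℝ T = n - 2) (hL : Module.finrank ℝ L = 2)
    (hdist : ‖(L.subtypeL.comp (L.orthogonalProjectionOnto))
      - (Tᗮ.subtypeL.comp (Tᗮ.orthogonalProjectionOnto))‖ ≤ 1 / 4)
    (h : EuclideanSpace ℝ (Fin n)) (hh : ‖h‖ ≤ 1 / 8) :
    ∃ z : EuclideanSpace ℝ (Fin n),
      (z ∈ T ∧ z - h ∈ L) ∧ ‖z‖ ≤ 1 / 6 ∧
        ∀ w : EuclideanSpace ℝ (Fin n), w ∈ T ∧ w - h ∈ L → w = z :=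
  stmt_16_general n T L hdist h hh
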